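/- arXiv:2101.03763 — 2 statements merged into one kernel-verified Lean document; each statement's English description precedes it below -/
import Mathlib

section
/- (Lemma 2.1(ii), boundedness) Every iterate x^k lies in the level set {x : F(x,0) ≤ F(x⁰, ε⁰)}; in particular the sequence {x^k} is bounded. -/
/-!
The merit function `ψ(xᵏ, xᵏ⁻¹, εᵏ) = F(xᵏ, εᵏ) + (β/2)‖xᵏ - xᵏ⁻¹‖²` is nonincreasing. In one
step, the descent lemma bounds `f(xᵏ⁺¹)` by the linearization of `f` at `yᵏ` plus
`(L_f/2)‖xᵏ⁺¹ - yᵏ‖²`, convexity of `f` bounds that linearization at `xᵏ` by `f(xᵏ)`, concavity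
of `t ↦ tᵖ` bounds the penalty at `(xᵏ⁺¹, εᵏ⁺¹)` by its tangent at `(xᵏ, εᵏ)`, which is the weighted
`ℓ₁` term, and `β`-strong convexity of the subproblem makes its value at `xᵏ⁺¹` smaller than at
`xᵏ` by `(β/2)‖xᵏ⁺¹ - xᵏ‖²`. Adding these, `L_f < β` and `‖xᵏ - yᵏ‖ ≤ ‖xᵏ - xᵏ⁻¹‖` leave
`ψ(xᵏ⁺¹, xᵏ, εᵏ⁺¹) ≤ ψ(xᵏ, xᵏ⁻¹, εᵏ)`. Telescoping,
`F(xᵏ, 0) ≤ F(xᵏ, εᵏ) ≤ ψ(x⁰, x⁻¹, ε⁰) = F(x⁰, ε⁰)`.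
-/

open Filter
open scoped BigOperators InnerProductSpace

noncomputable section

/-- Real n-dimensional Euclidean space. -/
abbrev Vec (n : ℕ) := EuclideanSpace ℝ (Fin n)

/-- The smoothed objective `F(x, ε) = f(x) + λ ∑ᵢ (|xᵢ| + εᵢ)^p`. -/
def Fobj (n : ℕ) (p lam : ℝ) (f : Vec n → ℝ) (z : Vec n) (ε : Fin n → ℝ) : ℝ :=
  f z + lam * ∑ i, (|z i| + ε i) ^ p

/-- The merit function `ψ(x, y, ε) = F(x, ε) + (β/2)‖x − y‖²`. -/
def psiObj (n : ℕ) (p lam β : ℝ) (f : Vec n → ℝ) (z y : Vec n) (ε : Fin n → ℝ) : ℝ :=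
  Fobj n p lam f z ε + β / 2 * ‖z - y‖ ^ 2

/-- The weighted-ℓ₁ subproblem objective at iteration `k`:
`⟨∇f(yₖ), z⟩ + (β/2)‖z − yₖ‖² + λ ∑ᵢ wᵢᵏ |zᵢ|` with `wᵢᵏ = p(|xᵢᵏ| + εᵢᵏ)^{p−1}`. -/
def subObj (n : ℕ) (p lam β : ℝ) (f : Vec n → ℝ) (xk yk : Vec n) (εk : Fin n → ℝ)
    (z : Vec n) : ℝ :=
  ⟪gradient f yk, z⟫_ℝ + β / 2 * ‖z - yk‖ ^ 2
    + lam * ∑ i, (p * (|xk i| + εk i) ^ (p - 1)) * |z i|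

/-- All the hypotheses of the EIRL1 algorithm (Algorithm 1) together with
Assumption 2.1.  The convention `x⁻¹ = x⁰` is encoded through truncated
subtraction on ℕ (`x (k-1) = x 0` for `k = 0`). -/
structure EIRL1 (n : ℕ) (p lam β Lf μ αbar : ℝ) (f : Vec n → ℝ)
    (x y : ℕ → Vec n) (ε : ℕ → Fin n → ℝ) (α : ℕ → ℝ) : Prop where
  hn : 1 ≤ n
  hp0 : 0 < p
  hp1 : p < 1
  hlam : 0 < lam
  hμ0 : 0 < μ
  hμ1 : μ < 1
  hLf : 0 ≤ Lf
  hβ : Lf < β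
  hconv : ConvexOn ℝ Set.univ f
  hdiff : ContDiff ℝ 1 f
  hlip : ∀ a b, ‖gradient f a - gradient f b‖ ≤ Lf * ‖a - b‖
  hαbar0 : 0 ≤ αbar
  hαbar1 : αbar < 1
  hα0 : ∀ k, 0 ≤ α k
  hα1 : ∀ k, α k ≤ αbar
  hε0 : ∀ i, 0 < ε 0 i
  hεpos : ∀ k i, 0 < ε (k + 1) i
  hεdec : ∀ k i, ε (k + 1) i ≤ μ * ε k i
  hy : ∀ k, y k = x k + α k • (x k - x (k - 1))
  hmin : ∀ k z, z ≠ x (k + 1) →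
    subObj n p lam β f (x k) (y k) (ε k) (x (k + 1)) < subObj n p lam β f (x k) (y k) (ε k) z
  hlevel : Bornology.IsBounded {z : Vec n | Fobj n p lam f z 0 ≤ Fobj n p lam f (x 0) (ε 0)}

open Set Topology

section Gradient

variable {E : Type*} [NormedAddCommGroup E] [InnerProductSpace ℝ E] [CompleteSpace E]
  {f : E → ℝ} {a b : E}

lemma HasGradientAt.hasDerivAt_comp_lineMap {g : E} {t : ℝ}
    (hf : HasGradientAt f g (AffineMap.lineMap a b t)) :
    HasDerivAt (f ∘ AffineMap.lineMap (k := ℝ) a b) ⟪g, b - a⟫_ℝ t := by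
  simpa using (hasGradientAt_iff_hasFDerivAt.mp hf).comp_hasDerivAt t AffineMap.hasDerivAt_lineMap

lemma ConvexOn.add_inner_gradient_le (hf : ConvexOn ℝ univ f) (hd : DifferentiableAt ℝ f a) :
    f a + ⟪gradient f a, b - a⟫_ℝ ≤ f b := by
  have hline : HasDerivAt (f ∘ AffineMap.lineMap (k := ℝ) a b) ⟪gradient f a, b - a⟫_ℝ 0 :=
    HasGradientAt.hasDerivAt_comp_lineMap (by simpa using hd.hasGradientAt)
  have := (hf.comp_affineMap (AffineMap.lineMap a b)).le_slope_of_hasDerivAt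
    (mem_univ 0) (mem_univ 1) zero_lt_one hline
  simp only [slope_def_field, Function.comp_apply, AffineMap.lineMap_apply_one,
    AffineMap.lineMap_apply_zero, sub_zero, div_one] at this
  linarith

/-- The descent lemma. -/
lemma le_add_inner_gradient_add_sq_norm {L : ℝ} (hd : Differentiable ℝ f)
    (hlip : ∀ a b, ‖gradient f a - gradient f b‖ ≤ L * ‖a - b‖) (a b : E) :
    f b ≤ f a + ⟪gradient f a, b - a⟫_ℝ + L / 2 * ‖b - a‖ ^ 2 := by
  set φ : ℝ → ℝ := fun t ↦
    f (AffineMap.lineMap a b t) - t * ⟪gradient f a, b - a⟫_ℝ - L / 2 * t ^ 2 * ‖b - a‖ ^ 2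
  have hφ' (t : ℝ) : HasDerivAt φ
      (⟪gradient f (AffineMap.lineMap a b t) - gradient f a, b - a⟫_ℝ - L * t * ‖b - a‖ ^ 2) t := by
    have := ((HasGradientAt.hasDerivAt_comp_lineMap (a := a) (b := b) (hd _).hasGradientAt).sub
      ((hasDerivAt_id t).mul_const ⟪gradient f a, b - a⟫_ℝ)).sub
      (((hasDerivAt_pow 2 t).const_mul (L / 2)).mul_const (‖b - a‖ ^ 2))
    exact this.congr_deriv (by simp only [inner_sub_left]; ring)
  have hφ'_nonpos (t : ℝ) (ht : 0 < t) :
      ⟪gradient f (AffineMap.lineMap a b t) - gradient f a, b - a⟫_ℝ ≤ L * t * ‖b - a‖ ^ 2 := by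
    have hdist : ‖AffineMap.lineMap a b t - a‖ = t * ‖b - a‖ := by
      rw [← dist_eq_norm, dist_lineMap_left, Real.norm_of_nonneg ht.le, dist_eq_norm']
    calc ⟪gradient f (AffineMap.lineMap a b t) - gradient f a, b - a⟫_ℝ
        _ ≤ ‖gradient f (AffineMap.lineMap a b t) - gradient f a‖ * ‖b - a‖ :=
          real_inner_le_norm _ _
        _ ≤ L * (t * ‖b - a‖) * ‖b - a‖ := by rw [← hdist]; gcongr; exact hlip _ _
        _ = L * t * ‖b - a‖ ^ 2 := by ring
  have hanti : AntitoneOn φ (Icc 0 1) :=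
    antitoneOn_of_hasDerivWithinAt_nonpos (convex_Icc 0 1)
      (fun t _ ↦ (hφ' t).continuousAt.continuousWithinAt) (fun t _ ↦ (hφ' t).hasDerivWithinAt)
      fun t ht ↦ by rw [interior_Icc] at ht; exact sub_nonpos.2 (hφ'_nonpos t ht.1)
  have := hanti (left_mem_Icc.2 zero_le_one) (right_mem_Icc.2 zero_le_one) zero_le_one
  simp only [φ, AffineMap.lineMap_apply_one, AffineMap.lineMap_apply_zero] at this
  linarith

end Gradient

section StrongConvex

variable {E : Type*} [NormedAddCommGroup E] [InnerProductSpace ℝ E] {s : Set E} {m : ℝ}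
  {f g : E → ℝ} {a b : E}

lemma ConvexOn.strongConvexOn_add_sq_norm_sub (hg : ConvexOn ℝ s g) (c : E) :
    StrongConvexOn s m fun z ↦ g z + m / 2 * ‖z - c‖ ^ 2 := by
  refine strongConvexOn_iff_convex.2 <|
    ((hg.add ((innerₗ E (-m • c)).convexOn hg.1)).add_const (m / 2 * ‖c‖ ^ 2)).congr fun z _ ↦ ?_
  simp only [Pi.add_apply, innerₗ_apply_apply, inner_smul_left, norm_sub_sq_real,
    real_inner_comm c z, Real.ringHom_apply]
  ring

lemma StrongConvexOn.add_sq_norm_sub_le_of_isMinOn (hf : StrongConvexOn s m f)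
    (hmin : IsMinOn f s a) (ha : a ∈ s) (hb : b ∈ s) :
    f a + m / 2 * ‖b - a‖ ^ 2 ≤ f b := by
  have key : ∀ t ∈ Ioc (0 : ℝ) 1, f a + (1 - t) * (m / 2 * ‖b - a‖ ^ 2) ≤ f b := by
    rintro t ⟨ht₀, ht₁⟩
    have hconv := hf.2 ha hb (sub_nonneg.2 ht₁) ht₀.le (sub_add_cancel 1 t)
    have hle := isMinOn_iff.1 hmin _ (hf.1 ha hb (sub_nonneg.2 ht₁) ht₀.le (sub_add_cancel 1 t))
    rw [norm_sub_rev] at hconv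
    simp only [smul_eq_mul] at hconv
    nlinarith
  have hlim : Tendsto (fun t : ℝ ↦ f a + (1 - t) * (m / 2 * ‖b - a‖ ^ 2)) (𝓝[>] 0)
      (𝓝 (f a + m / 2 * ‖b - a‖ ^ 2)) := by
    refine tendsto_nhdsWithin_of_tendsto_nhds ?_
    simpa using (Continuous.tendsto (by fun_prop) 0 :
      Tendsto (fun t : ℝ ↦ f a + (1 - t) * (m / 2 * ‖b - a‖ ^ 2)) (𝓝 0) _)
  exact le_of_tendsto hlim <| by
    filter_upwards [Ioc_mem_nhdsGT (zero_lt_one' ℝ)] with t ht using key t ht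

end StrongConvex

lemma convexOn_sum_mul_abs {ι : Type*} [Fintype ι] {w : ι → ℝ} (hw : ∀ i, 0 ≤ w i) :
    ConvexOn ℝ univ fun z : EuclideanSpace ℝ ι ↦ ∑ i, w i * |z i| := by
  refine ⟨convex_univ, fun u _ v _ a b ha hb _ ↦ ?_⟩
  simp only [smul_eq_mul, Finset.mul_sum, ← Finset.sum_add_distrib]
  gcongr with i
  calc w i * |(a • u + b • v) i| ≤ w i * (a * |u i| + b * |v i|) :=
        mul_le_mul_of_nonneg_left (by
          simpa [abs_mul, abs_of_nonneg ha, abs_of_nonneg hb] using abs_add_le (a * u i) (b * v i))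
          (hw i)
    _ = a * (w i * |u i|) + b * (w i * |v i|) := by ring

lemma Real.rpow_le_rpow_add_mul_rpow_sub_one_mul_sub {p s t : ℝ} (hp₀ : 0 ≤ p) (hp₁ : p ≤ 1)
    (hs : 0 ≤ s) (ht : 0 < t) :
    s ^ p ≤ t ^ p + p * t ^ (p - 1) * (s - t) := by
  have bernoulli := rpow_one_add_le_one_add_mul_self
    (by rw [le_div_iff₀ ht]; linarith : -1 ≤ (s - t) / t) hp₀ hp₁
  have hst : 1 + (s - t) / t = s / t := by field_simp; ring
  rw [hst, Real.div_rpow hs ht.le, div_le_iff₀ (by positivity)] at bernoulli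
  calc s ^ p ≤ (1 + p * ((s - t) / t)) * t ^ p := bernoulli
    _ = t ^ p + p * t ^ (p - 1) * (s - t) := by
      rw [Real.rpow_sub ht, Real.rpow_one]; field_simp

section Objectives

variable {n : ℕ} {p lam β : ℝ} {f : Vec n → ℝ}

lemma Fobj_zero_le_Fobj (hp : 0 ≤ p) (hlam : 0 ≤ lam) (z : Vec n) {ε : Fin n → ℝ}
    (hε : ∀ i, 0 ≤ ε i) : Fobj n p lam f z 0 ≤ Fobj n p lam f z ε := by
  unfold Fobj
  gcongr with i <;> simp [hε i]

/-- The weighted `ℓ₁` term of the subproblem is the tangent of the concave penalty at `u`;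
shrinking `ε` only lowers the penalty. -/
lemma sum_rpow_le_sum_rpow_add_weighted_abs (hp₀ : 0 ≤ p) (hp₁ : p ≤ 1) (u v : Vec n)
    {ε ε' : Fin n → ℝ} (hε : ∀ i, 0 < ε i) (hε' : ∀ i, 0 ≤ ε' i) (hε'ε : ∀ i, ε' i ≤ ε i) :
    ∑ i, (|v i| + ε' i) ^ p ≤ ∑ i, (|u i| + ε i) ^ p
      + (∑ i, p * (|u i| + ε i) ^ (p - 1) * |v i| - ∑ i, p * (|u i| + ε i) ^ (p - 1) * |u i|) := by
  rw [← Finset.sum_sub_distrib, ← Finset.sum_add_distrib]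
  gcongr with i
  calc (|v i| + ε' i) ^ p ≤ (|v i| + ε i) ^ p := by
        gcongr
        · exact add_nonneg (abs_nonneg _) (hε' i)
        · exact hε'ε i
    _ ≤ (|u i| + ε i) ^ p + p * (|u i| + ε i) ^ (p - 1) * ((|v i| + ε i) - (|u i| + ε i)) :=
        Real.rpow_le_rpow_add_mul_rpow_sub_one_mul_sub hp₀ hp₁
          (add_nonneg (abs_nonneg _) (hε i).le) (add_pos_of_nonneg_of_pos (abs_nonneg _) (hε i))
    _ = _ := by ring

lemma subObj_strongConvexOn (hp : 0 ≤ p) (hlam : 0 ≤ lam) (xk yk : Vec n) {εk : Fin n → ℝ}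
    (hεk : ∀ i, 0 ≤ εk i) : StrongConvexOn univ β (subObj n p lam β f xk yk εk) := by
  have hw (i : Fin n) : 0 ≤ p * (|xk i| + εk i) ^ (p - 1) :=
    mul_nonneg hp (Real.rpow_nonneg (add_nonneg (abs_nonneg _) (hεk i)) _)
  have hconv : ConvexOn ℝ univ fun z : Vec n ↦
      ⟪gradient f yk, z⟫_ℝ + lam * ∑ i, p * (|xk i| + εk i) ^ (p - 1) * |z i| :=
    ((innerₗ (Vec n) (gradient f yk)).convexOn convex_univ).add
      ((convexOn_sum_mul_abs hw).smul hlam)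
  have hsplit : subObj n p lam β f xk yk εk = fun z ↦
      (⟪gradient f yk, z⟫_ℝ + lam * ∑ i, p * (|xk i| + εk i) ^ (p - 1) * |z i|)
        + β / 2 * ‖z - yk‖ ^ 2 := by
    funext z
    simp only [subObj]
    ring
  rw [hsplit]
  exact hconv.strongConvexOn_add_sq_norm_sub yk

end Objectives

namespace EIRL1

variable {n : ℕ} {p lam β Lf μ αbar : ℝ} {f : Vec n → ℝ}
  {x y : ℕ → Vec n} {ε : ℕ → Fin n → ℝ} {α : ℕ → ℝ}
  (H : EIRL1 n p lam β Lf μ αbar f x y ε α)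
include H

lemma beta_nonneg : 0 ≤ β :=
  H.hLf.trans H.hβ.le

lemma eps_pos (k : ℕ) (i : Fin n) : 0 < ε k i := by
  cases k with
  | zero => exact H.hε0 i
  | succ k => exact H.hεpos k i

lemma eps_succ_le (k : ℕ) (i : Fin n) : ε (k + 1) i ≤ ε k i :=
  (H.hεdec k i).trans (mul_le_of_le_one_left (H.eps_pos k i).le H.hμ1.le)

lemma norm_sub_extrapolation_le (k : ℕ) : ‖x k - y k‖ ≤ ‖x k - x (k - 1)‖ := by
  have hα : |α k| ≤ 1 := abs_le.2 ⟨by linarith [H.hα0 k], by linarith [H.hα1 k, H.hαbar1]⟩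
  rw [H.hy k, sub_add_cancel_left, norm_neg, norm_smul, Real.norm_eq_abs]
  exact mul_le_of_le_one_left (norm_nonneg _) hα

lemma subObj_add_sq_norm_sub_le (k : ℕ) :
    subObj n p lam β f (x k) (y k) (ε k) (x (k + 1)) + β / 2 * ‖x k - x (k + 1)‖ ^ 2
      ≤ subObj n p lam β f (x k) (y k) (ε k) (x k) := by
  have hmin : IsMinOn (subObj n p lam β f (x k) (y k) (ε k)) univ (x (k + 1)) :=
    isMinOn_univ_iff.2 fun z ↦ by
      rcases eq_or_ne z (x (k + 1)) with rfl | hz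
      exacts [le_rfl, (H.hmin k z hz).le]
  exact (subObj_strongConvexOn H.hp0.le H.hlam.le _ _ fun i ↦ (H.eps_pos k i).le
    ).add_sq_norm_sub_le_of_isMinOn hmin (mem_univ _) (mem_univ _)

lemma psiObj_succ_le (k : ℕ) :
    psiObj n p lam β f (x (k + 1)) (x k) (ε (k + 1))
      ≤ psiObj n p lam β f (x k) (x (k - 1)) (ε k) := by
  have hd := H.hdiff.differentiable one_ne_zero
  have hdesc := le_add_inner_gradient_add_sq_norm hd H.hlip (y k) (x (k + 1))
  have hconv := H.hconv.add_inner_gradient_le (hd (y k)) (b := x k)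
  have hsub := H.subObj_add_sq_norm_sub_le k
  have hpen := mul_le_mul_of_nonneg_left (sum_rpow_le_sum_rpow_add_weighted_abs H.hp0.le
    H.hp1.le (x k) (x (k + 1)) (H.eps_pos k) (fun i ↦ (H.eps_pos (k + 1) i).le)
    (H.eps_succ_le k)) H.hlam.le
  have hmom : β / 2 * ‖x k - y k‖ ^ 2 ≤ β / 2 * ‖x k - x (k - 1)‖ ^ 2 := by
    have := H.beta_nonneg
    gcongr
    exact H.norm_sub_extrapolation_le k
  have hLf : Lf / 2 * ‖x (k + 1) - y k‖ ^ 2 ≤ β / 2 * ‖x (k + 1) - y k‖ ^ 2 := by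
    gcongr; exact H.hβ.le
  simp only [subObj, inner_sub_right, norm_sub_rev (x k) (x (k + 1))] at hdesc hconv hsub
  simp only [psiObj, Fobj, mul_add, mul_sub] at hpen ⊢
  linarith

lemma psiObj_le_Fobj_initial (k : ℕ) :
    psiObj n p lam β f (x k) (x (k - 1)) (ε k) ≤ Fobj n p lam f (x 0) (ε 0) := by
  induction k with
  | zero => simp [psiObj]
  | succ k ih => exact (H.psiObj_succ_le k).trans ih

lemma Fobj_le_Fobj_initial (k : ℕ) :
    Fobj n p lam f (x k) (ε k) ≤ Fobj n p lam f (x 0) (ε 0) :=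
  (le_add_of_nonneg_right (by have := H.beta_nonneg; positivity)).trans
    (H.psiObj_le_Fobj_initial k)

end EIRL1

/-- Lemma 2.1(ii): every iterate lies in the initial level set, and the
sequence of iterates is bounded. -/
theorem stmt_1 (n : ℕ) (p lam β Lf μ αbar : ℝ) (f : Vec n → ℝ)
    (x y : ℕ → Vec n) (ε : ℕ → Fin n → ℝ) (α : ℕ → ℝ)
    (H : EIRL1 n p lam β Lf μ αbar f x y ε α) :
    (∀ k, Fobj n p lam f (x k) 0 ≤ Fobj n p lam f (x 0) (ε 0)) ∧
      Bornology.IsBounded (Set.range x) := by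
  have hlevel (k : ℕ) : Fobj n p lam f (x k) 0 ≤ Fobj n p lam f (x 0) (ε 0) :=
    (Fobj_zero_le_Fobj H.hp0.le H.hlam.le (x k) fun i ↦ (H.eps_pos k i).le).trans
      (H.Fobj_le_Fobj_initial k)
  exact ⟨hlevel, H.hlevel.subset (Set.range_subset_iff.2 hlevel)⟩
end
end

section
/- (Theorem 2.2(i), zero components stay zero) Suppose C > 0 satisfies ‖∇f(y^k) + β(x^{k+1} − y^k)‖_∞ < C for all k (such a C exists since {x^k} and {y^k} are bounded). If w_i^{k̃} > C/λ for some index i and some iteration k̃, then x_i^k = 0 for all k > k̃. -/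
open Filter
open scoped BigOperators InnerProductSpace

noncomputable section

/-!
The weighted-ℓ₁ subproblem is separable: changing only the `i`-th coordinate changes `subObj` by
the change of the scalar function `subObjCoord g β y (λ w) s = g s + (β/2)(s - y)² + λ w |s|`.
So `x^{k+1}_i` minimizes this scalar function, and if it were nonzero then Fermat's rule at this
point of differentiability would give `|∇f(y^k)_i + β(x^{k+1}_i - y^k_i)| = λ w^k_i`. Hence
`λ w^k_i > C` forces `x^{k+1}_i = 0`; the weight then does not decrease, since `ε` does not
increase and `t ↦ t^{p-1}` is antitone, and induction keeps the component at zero.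
-/

def subObjCoord (g β y c s : ℝ) : ℝ :=
  g * s + β / 2 * (s - y) ^ 2 + c * |s|

def weight {n : ℕ} (p : ℝ) (xk : Vec n) (εk : Fin n → ℝ) (i : Fin n) : ℝ :=
  p * (|xk i| + εk i) ^ (p - 1)

theorem eq_zero_of_forall_subObjCoord_le {g β y c a : ℝ}
    (hmin : ∀ s, subObjCoord g β y c a ≤ subObjCoord g β y c s)
    (hlt : |g + β * (a - y)| < c) : a = 0 := by
  by_contra! ha
  have hderiv : HasDerivAt (subObjCoord g β y c)
      (g + β * (a - y) + c * SignType.sign a) a := by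
    have hsq := ((hasDerivAt_id' a).sub_const y).fun_pow 2
    refine ((((hasDerivAt_id' a).const_mul g).add (hsq.const_mul (β / 2))).add
      ((hasDerivAt_abs ha).const_mul c)).congr_deriv ?_
    ring
  have hcrit : g + β * (a - y) + c * SignType.sign a = 0 :=
    IsLocalMin.hasDerivAt_eq_zero (Filter.Eventually.of_forall hmin) hderiv
  have hc : 0 ≤ c := (abs_nonneg _).trans hlt.le
  have : |g + β * (a - y)| = c := by
    rw [eq_neg_of_add_eq_zero_left hcrit, abs_neg, abs_mul, abs_of_nonneg hc]
    rcases ha.lt_or_gt with hneg | hpos <;> simp [*]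
  exact hlt.ne this

theorem Fintype.sum_apply_update {ι α M : Type*} [Fintype ι] [DecidableEq ι] [AddCommGroup M]
    (F : ι → α → M) (v : ι → α) (i : ι) (s : α) :
    ∑ j, F j (Function.update v i s j) = ∑ j, F j (v j) + (F i s - F i (v i)) := by
  simp only [Function.apply_update F, Finset.sum_update_of_mem (Finset.mem_univ i),
    ← Finset.add_sum_erase _ _ (Finset.mem_univ i), Finset.sdiff_singleton_eq_erase]
  abel

theorem subObj_update {n : ℕ} (p lam β : ℝ) (f : Vec n → ℝ) (xk yk : Vec n)
    (εk : Fin n → ℝ) (v : Vec n) (i : Fin n) (s : ℝ) :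
    subObj n p lam β f xk yk εk (WithLp.toLp 2 (Function.update v i s))
      = subObj n p lam β f xk yk εk v
        + (subObjCoord (gradient f yk i) β (yk i) (lam * weight p xk εk i) s
          - subObjCoord (gradient f yk i) β (yk i) (lam * weight p xk εk i) (v i)) := by
  have hnormsq : ∀ z : Vec n, ‖z - yk‖ ^ 2 = ∑ j, (z j - yk j) ^ 2 := fun z => by
    simp [EuclideanSpace.norm_sq_eq]
  simp only [subObj, subObjCoord, weight, hnormsq, PiLp.inner_apply, RCLike.inner_apply,
    conj_trivial]
  rw [Fintype.sum_apply_update (fun j t => t * gradient f yk j),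
    Fintype.sum_apply_update (fun j t => (t - yk j) ^ 2),
    Fintype.sum_apply_update (fun j t => p * (|xk j| + εk j) ^ (p - 1) * |t|)]
  ring

theorem coord_eq_zero_of_forall_subObj_le {n : ℕ} {p lam β : ℝ} {f : Vec n → ℝ}
    {xk yk v : Vec n} {εk : Fin n → ℝ}
    (hv : ∀ z, subObj n p lam β f xk yk εk v ≤ subObj n p lam β f xk yk εk z) {i : Fin n}
    (hlt : |gradient f yk i + β * (v i - yk i)| < lam * weight p xk εk i) : v i = 0 := by
  refine eq_zero_of_forall_subObjCoord_le (fun s => ?_) hlt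
  have hs := hv (WithLp.toLp 2 (Function.update v i s))
  rw [subObj_update] at hs
  linarith

namespace EIRL1

variable {n : ℕ} {p lam β Lf μ αbar : ℝ} {f : Vec n → ℝ} {x y : ℕ → Vec n}
  {ε : ℕ → Fin n → ℝ} {α : ℕ → ℝ}

theorem subObj_le (H : EIRL1 n p lam β Lf μ αbar f x y ε α) (k : ℕ) (z : Vec n) :
    subObj n p lam β f (x k) (y k) (ε k) (x (k + 1)) ≤ subObj n p lam β f (x k) (y k) (ε k) z := by
  obtain rfl | hz := eq_or_ne z (x (k + 1))
  · exact le_rfl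
  · exact (H.hmin k z hz).le

theorem ε_pos (H : EIRL1 n p lam β Lf μ αbar f x y ε α) (k : ℕ) (i : Fin n) : 0 < ε k i := by
  cases k
  exacts [H.hε0 i, H.hεpos _ i]

theorem ε_succ_le (H : EIRL1 n p lam β Lf μ αbar f x y ε α) (k : ℕ) (i : Fin n) :
    ε (k + 1) i ≤ ε k i :=
  (H.hεdec k i).trans (mul_le_of_le_one_left (H.ε_pos k i).le H.hμ1.le)

theorem coord_succ_eq_zero (H : EIRL1 n p lam β Lf μ αbar f x y ε α) {C : ℝ} {k : ℕ} {i : Fin n}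
    (hC : |gradient f (y k) i + β * (x (k + 1) i - y k i)| < C)
    (hw : C < lam * weight p (x k) (ε k) i) : x (k + 1) i = 0 :=
  coord_eq_zero_of_forall_subObj_le (H.subObj_le k) (hC.trans hw)

theorem weight_le_succ (H : EIRL1 n p lam β Lf μ αbar f x y ε α) {k : ℕ} {i : Fin n}
    (hx : x (k + 1) i = 0) : weight p (x k) (ε k) i ≤ weight p (x (k + 1)) (ε (k + 1)) i := by
  have hbase : |x (k + 1) i| + ε (k + 1) i = ε (k + 1) i := by simp [hx]
  unfold weight
  rw [hbase]
  refine mul_le_mul_of_nonneg_left (Real.rpow_le_rpow_of_nonpos (H.ε_pos _ i) ?_ ?_) H.hp0.le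
  · linarith [H.ε_succ_le k i, abs_nonneg (x k i)]
  · linarith [H.hp1]

end EIRL1

theorem stmt_6_general (n : ℕ) (p lam β Lf μ αbar : ℝ) (f : Vec n → ℝ)
    (x y : ℕ → Vec n) (ε : ℕ → Fin n → ℝ) (α : ℕ → ℝ)
    (H : EIRL1 n p lam β Lf μ αbar f x y ε α)
    (C : ℝ)
    (hC : ∀ k, ∀ i, |gradient f (y k) i + β * (x (k + 1) i - y k i)| < C)
    (i : Fin n) (ktil : ℕ)
    (hw : p * (|x ktil i| + ε ktil i) ^ (p - 1) > C / lam) :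
    ∀ k > ktil, x k i = 0 := by
  have hpersist : ∀ k, ktil ≤ k → C < lam * weight p (x k) (ε k) i := by
    intro k hk
    induction k, hk using Nat.le_induction with
    | base => exact (div_lt_iff₀' H.hlam).mp hw
    | succ m _ ih =>
      exact ih.trans_le (mul_le_mul_of_nonneg_left
        (H.weight_le_succ (H.coord_succ_eq_zero (hC m i) ih)) H.hlam.le)
  intro k hk
  obtain ⟨m, rfl⟩ := Nat.exists_eq_add_of_lt hk
  exact H.coord_succ_eq_zero (hC _ i) (hpersist _ (Nat.le_add_right ktil m))

/-- Theorem 2.2(i): once a weight exceeds `C/λ`, the corresponding component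
stays zero in all later iterations.  Here `C > 0` is a uniform bound on
`‖∇f(yᵏ) + β(xᵏ⁺¹ − yᵏ)‖_∞`. -/
theorem stmt_6 (n : ℕ) (p lam β Lf μ αbar : ℝ) (f : Vec n → ℝ)
    (x y : ℕ → Vec n) (ε : ℕ → Fin n → ℝ) (α : ℕ → ℝ)
    (H : EIRL1 n p lam β Lf μ αbar f x y ε α)
    (C : ℝ) (hC0 : 0 < C)
    (hC : ∀ k, ∀ i, |gradient f (y k) i + β * (x (k + 1) i - y k i)| < C)
    (i : Fin n) (ktil : ℕ)
    (hw : p * (|x ktil i| + ε ktil i) ^ (p - 1) > C / lam) :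
    ∀ k > ktil, x k i = 0 :=
  stmt_6_general n p lam β Lf μ αbar f x y ε α H C hC i ktil hw
end
end
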